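/- arXiv:1902.03965 — 3 statements merged into one kernel-verified Lean document; each statement's English description precedes it below -/
import Mathlib

section
/- Let {f_a}_{a≥0} be a contracting Lorenz family such that (a,x) ↦ f_a(x) is C^1 in (a,x) for x ≠ 0, with A_1 ≤ |∂f/∂a(a,x)| ≤ A_2 for all a and all x ≠ 0; given λ > 1 and η > 2, let N ≥ 2 and A > 0 be as in the derivative-comparison proposition. Let ω be a parameter interval and n ≥ N an integer such that every a ∈ ω satisfies D_j^±(a) ≥ η^j for 1 ≤ j ≤ N and D_j^±(a) ≥ λ^j for 1 ≤ j ≤ n (so in particular ξ_j^±(a) ≠ 0 for j ≤ n). Then the length of ω satisfies |ω| ≤ 2A·λ^{-n}. (Lemma 3.7 of the paper; note that the exponent is −n, as the proof shows.) -/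
open Set Filter MeasureTheory
open scoped ENNReal

/-- A *contracting Lorenz family*: a one-parameter family of maps
`f a : [-1,1] → [-1,1]` (for parameters `a ≥ 0`) with `f a 0 = -1`, each of class
`C³` on `[-1,0)` and on `(0,1]`, satisfying conditions (A0)–(A6) of the paper. -/
structure CLF where
  /-- the family of maps, `f a x = f_a(x)` -/
  f : ℝ → ℝ → ℝ
  K₀ : ℝ
  K₁ : ℝ
  s : ℝ
  χ : ℝ
  K₀_pos : 0 < K₀
  K₁_pos : 0 < K₁
  s_gt_one : 1 < s
  χ_neg : χ < 0
  maps_to : ∀ a ∈ Ici (0:ℝ), ∀ x ∈ Icc (-1:ℝ) 1, f a x ∈ Icc (-1:ℝ) 1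
  f_at_zero : ∀ a ∈ Ici (0:ℝ), f a 0 = -1
  /-- (A0) -/
  fix_one : f 0 1 = 1
  fix_neg_one : f 0 (-1) = -1
  /-- `f_a` is `C³` on `[-1,0)` -/
  smooth_left : ∀ a ∈ Ici (0:ℝ), ContDiffOn ℝ 3 (f a) (Ico (-1:ℝ) 0)
  /-- `f_a` is `C³` on `(0,1]` -/
  smooth_right : ∀ a ∈ Ici (0:ℝ), ContDiffOn ℝ 3 (f a) (Ioc (0:ℝ) 1)
  /-- (A1) `f_a(0⁺) = -1` -/
  lim_zero_right : ∀ a ∈ Ici (0:ℝ), Tendsto (f a) (nhdsWithin 0 (Ioi 0)) (nhds (-1))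
  /-- (A1) `f_a(0⁻) = 1` -/
  lim_zero_left : ∀ a ∈ Ici (0:ℝ), Tendsto (f a) (nhdsWithin 0 (Iio 0)) (nhds 1)
  /-- (A2) `f_a' > 0` off `0` -/
  deriv_pos : ∀ a ∈ Ici (0:ℝ), ∀ x ∈ Icc (-1:ℝ) 1, x ≠ 0 → 0 < deriv (f a) x
  /-- (A2) `f_a'' < 0` on `[-1,0)` -/
  deriv2_neg : ∀ a ∈ Ici (0:ℝ), ∀ x ∈ Ico (-1:ℝ) 0, deriv (deriv (f a)) x < 0
  /-- (A2) `f_a'' > 0` on `(0,1]` -/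
  deriv2_pos : ∀ a ∈ Ici (0:ℝ), ∀ x ∈ Ioc (0:ℝ) 1, 0 < deriv (deriv (f a)) x
  /-- (A3) lower bound -/
  deriv_lower : ∀ a ∈ Ici (0:ℝ), ∀ x ∈ Icc (-1:ℝ) 1, x ≠ 0 →
    K₀ * |x| ^ (s - 1) ≤ deriv (f a) x
  /-- (A3) upper bound -/
  deriv_upper : ∀ a ∈ Ici (0:ℝ), ∀ x ∈ Icc (-1:ℝ) 1, x ≠ 0 →
    deriv (f a) x ≤ K₁ * |x| ^ (s - 1)
  /-- (A4) negative Schwarzian derivative, uniformly bounded away from `0` -/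
  schwarzian_lt : ∀ a ∈ Ici (0:ℝ), ∀ x ∈ Icc (-1:ℝ) 1, x ≠ 0 →
    deriv (fun y => deriv (deriv (f a)) y / deriv (f a) y) x
      - (deriv (deriv (f a)) x / deriv (f a) x) ^ 2 / 2 < χ
  /-- (A5) `f_a` depends continuously on `a` in the `C³` topology -/
  cont_param : ∀ k : ℕ, k ≤ 3 →
    ContinuousOn (fun p : ℝ × ℝ => iteratedDeriv k (f p.1) p.2)
      (Ici (0:ℝ) ×ˢ (Icc (-1:ℝ) 1 \ {0}))
  /-- (A6) -/
  deriv_param_one : HasDerivAt (fun a => f a 1) 1 0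
  /-- (A6) -/
  deriv_param_neg_one : HasDerivAt (fun a => f a (-1)) 1 0

namespace CLF

/-- `xi F z k a = f_a^{k-1}(z)`; with `z = -1` this is `ξ_k⁺(a)` (orbit of the
critical value `-1`), and with `z = 1` it is `ξ_k⁻(a)`. -/
noncomputable def xi (F : CLF) (z : ℝ) (k : ℕ) (a : ℝ) : ℝ := (F.f a)^[k - 1] z

/-- `D F z k a = (f_a^k)'(z)`, computed via the chain rule as the product of the
derivatives of `f_a` along the orbit of `z`; with `z = -1` this is `D_k⁺(a)`,
with `z = 1` it is `D_k⁻(a)`. -/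
noncomputable def D (F : CLF) (z : ℝ) (k : ℕ) (a : ℝ) : ℝ :=
  ∏ i ∈ Finset.range k, deriv (F.f a) ((F.f a)^[i] z)

end CLF

/-!
The critical orbit point `ξ_{n+1}(a) = f_a^n(-1)` stays in `[-1, 1]`, so it moves by at most `2`
as `a` runs over `ω`. On the other hand, the derivative-comparison proposition at time `n + 1`
gives `|ξ_{n+1}'(a)| ≥ D_n(a) / A ≥ λ^n / A` throughout `ω`, and the mean value theorem turns
this into `|ω| · λ^n / A ≤ 2`.
-/

theorem mul_sub_le_abs_sub_of_le_abs_deriv {g : ℝ → ℝ} {u v c : ℝ} (hc : 0 < c)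
    (hg : ∀ a ∈ Icc u v, c ≤ |deriv g a|) : c * (v - u) ≤ |g v - g u| := by
  rcases le_or_gt v u with hvu | huv
  · nlinarith [abs_nonneg (g v - g u)]
  -- `deriv g a ≠ 0` forces differentiability, as `deriv` is `0` wherever `g` is not differentiable
  have hdiff : ∀ a ∈ Icc u v, DifferentiableAt ℝ g a := fun a ha =>
    differentiableAt_of_deriv_ne_zero (abs_pos.mp (hc.trans_le (hg a ha)))
  obtain ⟨w, hw, hslope⟩ := exists_deriv_eq_slope g huv
    (fun a ha => (hdiff a ha).continuousAt.continuousWithinAt)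
    (fun a ha => (hdiff a (Ioo_subset_Icc_self ha)).differentiableWithinAt)
  have hcw := hg w (Ioo_subset_Icc_self hw)
  rwa [hslope, abs_div, abs_of_pos (sub_pos.2 huv), le_div_iff₀ (sub_pos.2 huv)] at hcw

namespace CLF

theorem iterate_mem_Icc (F : CLF) {a : ℝ} (ha : 0 ≤ a) {x : ℝ} (hx : x ∈ Icc (-1 : ℝ) 1)
    (m : ℕ) : (F.f a)^[m] x ∈ Icc (-1 : ℝ) 1 :=
  MapsTo.iterate (F.maps_to a ha) m hx

theorem abs_xi_sub_le_two (F : CLF) {z : ℝ} (hz : z ∈ Icc (-1 : ℝ) 1) (k : ℕ) {a b : ℝ}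
    (ha : 0 ≤ a) (hb : 0 ≤ b) : |F.xi z k a - F.xi z k b| ≤ 2 := by
  have hxa := F.iterate_mem_Icc ha hz (k - 1)
  have hxb := F.iterate_mem_Icc hb hz (k - 1)
  rw [xi, xi, abs_sub_le_iff]
  constructor <;> linarith [hxa.1, hxa.2, hxb.1, hxb.2]

end CLF

theorem statement10_general (F : CLF)
    (lam η : ℝ) (hlam : 1 < lam)
    -- the constants of the derivative-comparison proposition for `lam`, `η`:
    (N : ℕ) (hN : 2 ≤ N) (A : ℝ) (hA : 0 < A)
    (hcomp : ∀ z ∈ ({-1, 1} : Set ℝ), ∀ a ∈ Ici (0:ℝ), ∀ k : ℕ, N ≤ k →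
      (∀ j : ℕ, 1 ≤ j → j ≤ N → η ^ j ≤ F.D z j a) →
      (∀ j : ℕ, 1 ≤ j → j ≤ k - 1 → lam ^ j ≤ F.D z j a) →
      1 / A ≤ |deriv (F.xi z k) a| / F.D z (k - 1) a ∧
        |deriv (F.xi z k) a| / F.D z (k - 1) a ≤ A)
    -- the parameter interval `ω = [u,v]`:
    (u v : ℝ) (hω : Icc u v ⊆ Ici (0:ℝ))
    (n : ℕ) (hn : N ≤ n)
    (hD1 : ∀ z ∈ ({-1, 1} : Set ℝ), ∀ a ∈ Icc u v,
      ∀ j : ℕ, 1 ≤ j → j ≤ N → η ^ j ≤ F.D z j a)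
    (hD2 : ∀ z ∈ ({-1, 1} : Set ℝ), ∀ a ∈ Icc u v,
      ∀ j : ℕ, 1 ≤ j → j ≤ n → lam ^ j ≤ F.D z j a) :
    v - u ≤ 2 * A / lam ^ n := by
  have hlamn : 0 < lam ^ n := pow_pos (zero_lt_one.trans hlam) n
  rcases lt_or_ge v u with hvu | huv
  · linarith [div_pos (mul_pos two_pos hA) hlamn]
  have hz : (-1 : ℝ) ∈ ({-1, 1} : Set ℝ) := by simp
  have hderiv : ∀ a ∈ Icc u v, lam ^ n / A ≤ |deriv (F.xi (-1) (n + 1)) a| := by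
    intro a ha
    have hDn : lam ^ n ≤ F.D (-1) n a := hD2 (-1) hz a ha n (by omega) le_rfl
    have hcmp := (hcomp (-1) hz a (hω ha) (n + 1) (by omega) (hD1 (-1) hz a ha)
      fun j hj₁ hj₂ => hD2 (-1) hz a ha j hj₁ (by omega)).1
    rw [Nat.add_sub_cancel, div_le_div_iff₀ hA (hlamn.trans_le hDn)] at hcmp
    rw [div_le_iff₀ hA]
    linarith
  have hmove := F.abs_xi_sub_le_two (z := -1) (by norm_num) (n + 1)
    (hω (right_mem_Icc.2 huv)) (hω (left_mem_Icc.2 huv))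
  have hlen := mul_sub_le_abs_sub_of_le_abs_deriv (div_pos hlamn hA) hderiv
  rw [div_mul_eq_mul_div, div_le_iff₀ hA] at hlen
  rw [le_div_iff₀ hlamn]
  linarith [mul_le_mul_of_nonneg_right hmove hA.le]

/-- Lemma 3.7 of the paper: a parameter interval all of whose
parameters have exponential derivative growth along the critical orbits up to
time `n` has length at most `2A·λ^{-n}`. -/
theorem statement10 (F : CLF)
    (hC1 : ContDiffOn ℝ 1 (fun pr : ℝ × ℝ => F.f pr.1 pr.2) {pr : ℝ × ℝ | pr.2 ≠ 0})
    (A₁ A₂ : ℝ) (hA₁ : 0 < A₁) (hA₂ : 0 < A₂)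
    (hA12 : ∀ a ∈ Ici (0:ℝ), ∀ x ∈ Icc (-1:ℝ) 1, x ≠ 0 →
      A₁ ≤ |deriv (fun b => F.f b x) a| ∧ |deriv (fun b => F.f b x) a| ≤ A₂)
    (lam η : ℝ) (hlam : 1 < lam) (hη : 2 < η)
    -- the constants of the derivative-comparison proposition for `lam`, `η`:
    (N : ℕ) (hN : 2 ≤ N) (A : ℝ) (hA : 0 < A)
    (hcomp : ∀ z ∈ ({-1, 1} : Set ℝ), ∀ a ∈ Ici (0:ℝ), ∀ k : ℕ, N ≤ k →
      (∀ j : ℕ, 1 ≤ j → j ≤ N → η ^ j ≤ F.D z j a) →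
      (∀ j : ℕ, 1 ≤ j → j ≤ k - 1 → lam ^ j ≤ F.D z j a) →
      1 / A ≤ |deriv (F.xi z k) a| / F.D z (k - 1) a ∧
        |deriv (F.xi z k) a| / F.D z (k - 1) a ≤ A)
    -- the parameter interval `ω = [u,v]`:
    (u v : ℝ) (huv : u ≤ v) (hω : Icc u v ⊆ Ici (0:ℝ))
    (n : ℕ) (hn : N ≤ n)
    (hD1 : ∀ z ∈ ({-1, 1} : Set ℝ), ∀ a ∈ Icc u v,
      ∀ j : ℕ, 1 ≤ j → j ≤ N → η ^ j ≤ F.D z j a)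
    (hD2 : ∀ z ∈ ({-1, 1} : Set ℝ), ∀ a ∈ Icc u v,
      ∀ j : ℕ, 1 ≤ j → j ≤ n → lam ^ j ≤ F.D z j a) :
    v - u ≤ 2 * A / lam ^ n :=
  statement10_general F lam η hlam N hN A hA hcomp u v hω n hn hD1 hD2
end

section
/- Let I = [-1,1] and for each n ∈ ℕ let f_n : I → I be a map having a periodic orbit O_n of exact period q_n; let μ_n be the uniform probability measure on O_n (assigning mass 1/q_n to each point of the orbit). Let L ≥ 0 and N > 0 be fixed integers, and let y^-, y^+ ∈ I. Suppose there exist points x_n ∈ O_n and integers m_n with: q_n = m_n + ρ_n for some 0 ≤ ρ_n ≤ N; m_n − L + 1 is even and positive; m_n → ∞ as n → ∞; and for every r > 0 there exists n_0 such that for all n ≥ n_0 and all L ≤ i ≤ m_n, |f_n^i(x_n) − z_{i-L}| < r, where z_j = y^- if j is even and z_j = y^+ if j is odd. Then μ_n converges in the weak* topology to (1/2)(δ_{y^-} + δ_{y^+}), i.e. ∫ φ dμ_n → (φ(y^-) + φ(y^+))/2 for every continuous φ : I → ℝ. (Core averaging argument of Proposition 5.2 of the paper.) -/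
open Set Filter MeasureTheory
open scoped ENNReal

/-!
Outside the window `[L, m_n]`, which misses at most `L + N` of the `q_n` orbit points, `φ` is
bounded on `I`. Inside it, by continuity of `φ` at `y⁻` and `y⁺`, the values `φ (f_n^i x_n)` are
uniformly close to the alternating sequence `φ y⁻, φ y⁺, …`, whose partial sums differ from
`k (φ y⁻ + φ y⁺) / 2` by at most `|φ y⁻ - φ y⁺| / 2`. So the orbit sum is
`q_n (φ y⁻ + φ y⁺) / 2 + o(q_n)`, and dividing by `q_n → ∞` gives the limit.
-/

open Finset Topology

lemma integral_smul_sum_dirac {α : Type*} [MeasurableSpace α] [MeasurableSingletonClass α]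
    (φ : α → ℝ) (c : ℝ≥0∞) (s : Finset ℕ) (p : ℕ → α) :
    ∫ y, φ y ∂(c • ∑ i ∈ s, Measure.dirac (p i)) = c.toReal * ∑ i ∈ s, φ (p i) := by
  rw [integral_smul_measure, integral_finsetSum_measure
    fun i _ => integrable_dirac (by simp), smul_eq_mul]
  simp only [integral_dirac]

lemma sum_range_ite_even_sub_average (A B : ℝ) (n : ℕ) :
    ∑ j ∈ range n, ((if Even j then A else B) - (A + B) / 2) =
      if Even n then 0 else (A - B) / 2 := by
  induction n with
  | zero => simp
  | succ n ih =>
    rw [sum_range_succ, ih]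
    by_cases hn : Even n
    · simp only [hn, Nat.even_add_one, not_true_eq_false, if_true, if_false]; ring
    · simp only [hn, Nat.even_add_one, not_false_eq_true, if_true, if_false]; ring

lemma abs_sum_Ico_ite_even_sub_le (A B : ℝ) (L k : ℕ) :
    |∑ i ∈ Ico L k, (if Even (i - L) then A else B) - (k - L : ℕ) * ((A + B) / 2)|
      ≤ |A - B| / 2 := by
  have h := sum_range_ite_even_sub_average A B (k - L)
  rw [sum_sub_distrib, sum_const, card_range, nsmul_eq_mul] at h
  rw [sum_Ico_eq_sum_range]
  simp only [Nat.add_sub_cancel_left, h]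
  split_ifs
  · rw [abs_zero]; positivity
  · rw [abs_div, abs_two]

lemma abs_sum_range_sub_sum_Ico_le {a : ℕ → ℝ} {M : ℝ} (hM : ∀ i, |a i| ≤ M)
    {L m q : ℕ} (hmq : m ≤ q) :
    |∑ i ∈ range q, a i - ∑ i ∈ Ico L m, a i| ≤ (q - (m - L) : ℕ) * M := by
  have hsub : Finset.Ico L m ⊆ Finset.range q := fun i hi =>
    mem_range.2 ((Finset.mem_Ico.1 hi).2.trans_le hmq)
  rw [← sum_sdiff hsub, add_sub_cancel_right]
  calc |∑ i ∈ range q \ Ico L m, a i|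
      ≤ ∑ i ∈ range q \ Ico L m, |a i| := abs_sum_le_sum_abs _ _
    _ ≤ #(range q \ Ico L m) • M := sum_le_card_nsmul _ _ _ fun i _ => hM i
    _ = (q - (m - L) : ℕ) * M := by
      rw [card_sdiff_of_subset hsub, card_range, Nat.card_Ico, nsmul_eq_mul]

lemma abs_sum_range_sub_mul_average_le {a : ℕ → ℝ} {A B M η : ℝ} {L m q : ℕ}
    (hM : ∀ i, |a i| ≤ M) (hmq : m ≤ q) (hη : 0 ≤ η)
    (hclose : ∀ i, L ≤ i → i < m → |a i - (if Even (i - L) then A else B)| ≤ η) :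
    |∑ i ∈ range q, a i - q * ((A + B) / 2)|
      ≤ q * η + (q - (m - L) : ℕ) * (M + |(A + B) / 2|) + |A - B| / 2 := by
  set c := (A + B) / 2
  set b : ℕ → ℝ := fun i => if Even (i - L) then A else B
  have hwindow : |∑ i ∈ Ico L m, (a i - b i)| ≤ q * η :=
    calc |∑ i ∈ Ico L m, (a i - b i)|
        ≤ ∑ i ∈ Ico L m, |a i - b i| := abs_sum_le_sum_abs _ _
      _ ≤ #(Ico L m) • η := sum_le_card_nsmul _ _ _ fun i hi => by
          rw [Finset.mem_Ico] at hi; exact hclose i hi.1 hi.2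
      _ ≤ q * η := by
          rw [nsmul_eq_mul, Nat.card_Ico]
          gcongr
          exact_mod_cast (Nat.sub_le m L).trans hmq
  have hcount : ((m - L : ℕ) : ℝ) - q = -(q - (m - L) : ℕ) := by
    rw [Nat.cast_sub ((Nat.sub_le m L).trans hmq)]; ring
  have hdecomp : ∑ i ∈ range q, a i - q * c =
      (∑ i ∈ range q, a i - ∑ i ∈ Ico L m, a i) + ∑ i ∈ Ico L m, (a i - b i)
        + (∑ i ∈ Ico L m, b i - (m - L : ℕ) * c) + (((m - L : ℕ) : ℝ) - q) * c := by
    rw [sum_sub_distrib]; ring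
  have hout := abs_sum_range_sub_sum_Ico_le (L := L) hM hmq
  have hpattern := abs_sum_Ico_ite_even_sub_le A B L m
  rw [hdecomp, hcount]
  calc _ ≤ |∑ i ∈ range q, a i - ∑ i ∈ Ico L m, a i| + |∑ i ∈ Ico L m, (a i - b i)|
        + |∑ i ∈ Ico L m, b i - (m - L : ℕ) * c| + |-((q - (m - L) : ℕ) : ℝ) * c| :=
        (abs_add_le _ _).trans <| add_le_add_left
          ((abs_add_le _ _).trans <| add_le_add_left (abs_add_le _ _) _) _
    _ ≤ (q - (m - L) : ℕ) * M + q * η + |A - B| / 2 + (q - (m - L) : ℕ) * |c| := by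
        rw [abs_mul, abs_neg, Nat.abs_cast]
        gcongr
    _ = _ := by ring

theorem tendsto_average_of_shadows_alternating {a : ℕ → ℕ → ℝ} {M : ℝ} (hM : ∀ n i, |a n i| ≤ M)
    {q m : ℕ → ℕ} {L N : ℕ} (hmq : ∀ n, m n ≤ q n) (hqm : ∀ n, q n ≤ m n + N)
    (hm : Tendsto m atTop atTop) {A B : ℝ}
    (hclose : ∀ ε > 0, ∀ᶠ n in atTop, ∀ i, L ≤ i → i < m n →
      |a n i - (if Even (i - L) then A else B)| < ε) :
    Tendsto (fun n => (q n : ℝ)⁻¹ * ∑ i ∈ range (q n), a n i) atTop (𝓝 ((A + B) / 2)) := by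
  set K : ℝ := (L + N) * (M + |(A + B) / 2|) + |A - B| / 2 with hK_def
  have hM0 : 0 ≤ M := (abs_nonneg _).trans (hM 0 0)
  have hq : Tendsto (fun n => (q n : ℝ)) atTop atTop :=
    tendsto_natCast_atTop_atTop.comp (tendsto_atTop_mono hmq hm)
  rw [Metric.tendsto_nhds]
  intro ε hε
  filter_upwards [hclose (ε / 2) (half_pos hε), hq.eventually_gt_atTop (2 * K / ε)]
    with n hshadow hlarge
  have hK : 0 ≤ K := by positivity
  have hqpos : 0 < (q n : ℝ) := (div_nonneg (mul_nonneg zero_le_two hK) hε.le).trans_lt hlarge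
  rw [div_lt_iff₀ hε] at hlarge
  have hest := abs_sum_range_sub_mul_average_le (fun i => hM n i) (hmq n) (half_pos hε).le
    fun i hLi him => (hshadow i hLi him).le
  have hcount : ((q n - (m n - L) : ℕ) : ℝ) * (M + |(A + B) / 2|)
      ≤ (L + N) * (M + |(A + B) / 2|) := by
    gcongr
    exact_mod_cast (by grind : q n - (m n - L) ≤ L + N)
  rw [Real.dist_eq, show (q n : ℝ)⁻¹ * ∑ i ∈ range (q n), a n i - (A + B) / 2
      = (∑ i ∈ range (q n), a n i - q n * ((A + B) / 2)) / q n by field_simp,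
    abs_div, abs_of_pos hqpos, div_lt_iff₀ hqpos]
  linarith

theorem statement13_general
    (f : ℕ → ℝ → ℝ) (hf : ∀ n, MapsTo (f n) (Icc (-1:ℝ) 1) (Icc (-1:ℝ) 1))
    (q m ρ : ℕ → ℕ) (x : ℕ → ℝ) (hx : ∀ n, x n ∈ Icc (-1:ℝ) 1)
    (L N : ℕ)
    (ymin yplus : ℝ)
    (hq : ∀ n, q n = m n + ρ n) (hρ : ∀ n, ρ n ≤ N)
    (hm : Tendsto m atTop atTop)
    -- shadowing of the alternating pattern:
    (hclose : ∀ r : ℝ, 0 < r → ∃ n₀ : ℕ, ∀ n, n₀ ≤ n → ∀ i : ℕ, L ≤ i → i ≤ m n →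
      |(f n)^[i] (x n) - (if Even (i - L) then ymin else yplus)| < r) :
    ∀ φ : ℝ → ℝ, Continuous φ →
      Tendsto (fun n => ∫ y, φ y ∂((q n : ℝ≥0∞)⁻¹ •
          ∑ i ∈ Finset.range (q n), MeasureTheory.Measure.dirac ((f n)^[i] (x n))))
        atTop (nhds ((φ ymin + φ yplus) / 2)) := by
  intro φ hφ
  simp only [integral_smul_sum_dirac, ENNReal.toReal_inv, ENNReal.toReal_natCast]
  obtain ⟨M, hM⟩ := isCompact_Icc.exists_bound_of_continuousOn hφ.continuousOn
  refine tendsto_average_of_shadows_alternating (M := M) (L := L) (N := N)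
    (fun n i => hM _ ((hf n).iterate i (hx n))) (fun n => by grind) (fun n => by grind) hm ?_
  intro ε hε
  obtain ⟨δ₁, hδ₁, hφ₁⟩ := Metric.continuous_iff.1 hφ ymin ε hε
  obtain ⟨δ₂, hδ₂, hφ₂⟩ := Metric.continuous_iff.1 hφ yplus ε hε
  obtain ⟨n₀, hn₀⟩ := hclose (min δ₁ δ₂) (lt_min hδ₁ hδ₂)
  filter_upwards [eventually_ge_atTop n₀] with n hn i hLi him
  have hshadow := hn₀ n hn i hLi him.le
  split_ifs at hshadow ⊢
  · exact hφ₁ _ (hshadow.trans_le (min_le_left _ _))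
  · exact hφ₂ _ (hshadow.trans_le (min_le_right _ _))

/-- core averaging argument of Proposition 5.2 of the paper:
if the periodic orbits `O_n` of `f_n` spend all but a bounded number of their
iterates `r`-shadowing the alternating pattern `y⁻, y⁺, y⁻, …` (for every
`r > 0`, eventually in `n`), then the uniform measures on the orbits `O_n`
converge in the weak* topology to `(δ_{y⁻} + δ_{y⁺})/2`. -/
theorem statement13
    (f : ℕ → ℝ → ℝ) (hf : ∀ n, MapsTo (f n) (Icc (-1:ℝ) 1) (Icc (-1:ℝ) 1))
    (q m ρ : ℕ → ℕ) (x : ℕ → ℝ) (hx : ∀ n, x n ∈ Icc (-1:ℝ) 1)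
    (L N : ℕ) (hN : 0 < N)
    (ymin yplus : ℝ) (hymin : ymin ∈ Icc (-1:ℝ) 1) (hyplus : yplus ∈ Icc (-1:ℝ) 1)
    -- `x n` is a point of a periodic orbit of `f n` of exact period `q n`:
    (hper : ∀ n, (f n)^[q n] (x n) = x n)
    (hexact : ∀ n, ∀ i : ℕ, 0 < i → i < q n → (f n)^[i] (x n) ≠ x n)
    (hq : ∀ n, q n = m n + ρ n) (hρ : ∀ n, ρ n ≤ N)
    -- `m n - L + 1` is even and positive:
    (hmL : ∀ n, ∃ t : ℕ, 1 ≤ t ∧ m n + 1 = L + 2 * t)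
    (hm : Tendsto m atTop atTop)
    -- shadowing of the alternating pattern:
    (hclose : ∀ r : ℝ, 0 < r → ∃ n₀ : ℕ, ∀ n, n₀ ≤ n → ∀ i : ℕ, L ≤ i → i ≤ m n →
      |(f n)^[i] (x n) - (if Even (i - L) then ymin else yplus)| < r) :
    ∀ φ : ℝ → ℝ, Continuous φ →
      Tendsto (fun n => ∫ y, φ y ∂((q n : ℝ≥0∞)⁻¹ •
          ∑ i ∈ Finset.range (q n), MeasureTheory.Measure.dirac ((f n)^[i] (x n))))
        atTop (nhds ((φ ymin + φ yplus) / 2)) :=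
  statement13_general f hf q m ρ x hx L N ymin yplus hq hρ hm hclose
end

section
/- Let f : ℝ × [-1,1] → [-1,1] be a map, C^1 in (a,x) for x ≠ 0, write f_a = f(a,·), ξ_k(a) = f_a^{k-1}(-1), D_k(a) = (f_a^k)'(-1). Fix a parameter a and n ≥ 2 with ξ_k(a) ≠ 0 and D_k(a) > 0 for k = 1, …, n-1, and suppose A_1 ≤ |(∂f/∂a)(a,x)| ≤ A_2 for all x ∈ [-1,1]\{0}, for constants 0 < A_1 ≤ A_2. Then A_1/D_1(a) − A_2·Σ_{k=2}^{n-1} 1/D_k(a) ≤ |ξ_n'(a)| / D_{n-1}(a) ≤ A_2·Σ_{k=1}^{n-1} 1/D_k(a). (Quantitative bound (4.1.4) in the proof of Proposition 2.2 of the paper.) -/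
/-!
Differentiating `ξ_{k+1}(b) = f(b, ξ_k(b))` in `b` gives the recursion
`ξ_{k+1}' = ∂_a f(a, ξ_k) + ∂_x f(a, ξ_k) ξ_k'`, and dividing by `D_{k+1} = ∂_x f(a, ξ_k) D_k`
telescopes it into `ξ_n' / D_{n-1} = Σ_{k=1}^{n-1} ∂_a f(a, ξ_k) / D_k`.
Since every `D_k` is positive, the triangle inequality bounds the absolute value of this sum
from above by `A₂ Σ 1/D_k`, and from below by its first term `≥ A₁/D_1` minus the rest.
-/

open Set

/-- `D_k`; it equals `(f_a^k)'(x₀)` by the chain rule when `f_a` is differentiable along the orbit. -/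
noncomputable def orbitSpaceDeriv (f : ℝ → ℝ → ℝ) (a x₀ : ℝ) (k : ℕ) : ℝ :=
  ∏ i ∈ Finset.range k, deriv (f a) ((f a)^[i] x₀)

theorem orbitSpaceDeriv_succ (f : ℝ → ℝ → ℝ) (a x₀ : ℝ) (k : ℕ) :
    orbitSpaceDeriv f a x₀ (k + 1) = orbitSpaceDeriv f a x₀ k * deriv (f a) ((f a)^[k] x₀) :=
  Finset.prod_range_succ _ _

theorem hasDerivAt_param_comp {f : ℝ → ℝ → ℝ} {y : ℝ → ℝ} {a d : ℝ}
    (hf : DifferentiableAt ℝ (fun p : ℝ × ℝ => f p.1 p.2) (a, y a)) (hy : HasDerivAt y d a) :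
    HasDerivAt (fun b => f b (y b)) (deriv (fun b => f b (y a)) a + deriv (f a) (y a) * d) a := by
  set L := fderiv ℝ (fun p : ℝ × ℝ => f p.1 p.2) (a, y a)
  have hL : HasFDerivAt (fun p : ℝ × ℝ => f p.1 p.2) L (a, y a) := hf.hasFDerivAt
  have hparam : HasDerivAt (fun b => f b (y a)) (L (1, 0)) a :=
    hL.comp_hasDerivAt (f := fun b => (b, y a)) a
      ((hasDerivAt_id' a).prodMk (hasDerivAt_const a (y a)))
  have hspace : HasDerivAt (f a) (L (0, 1)) (y a) :=
    hL.comp_hasDerivAt (f := fun x => (a, x)) (y a)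
      ((hasDerivAt_const (y a) a).prodMk (hasDerivAt_id' (y a)))
  have hsplit : L (1, d) = L (1, 0) + d * L (0, 1) := by
    rw [show ((1 : ℝ), d) = ((1 : ℝ), (0 : ℝ)) + d • ((0 : ℝ), (1 : ℝ)) by simp, map_add, map_smul,
      smul_eq_mul]
  rw [hparam.deriv, hspace.deriv, mul_comm, ← hsplit]
  exact hL.comp_hasDerivAt a ((hasDerivAt_id' a).prodMk hy)

theorem hasDerivAt_iterate_param {f : ℝ → ℝ → ℝ} {a x₀ : ℝ} {N : ℕ}
    (hdiff : ∀ i < N, DifferentiableAt ℝ (fun p : ℝ × ℝ => f p.1 p.2) (a, (f a)^[i] x₀))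
    (hD : ∀ k ≤ N, orbitSpaceDeriv f a x₀ k ≠ 0) :
    HasDerivAt (fun b => (f b)^[N] x₀)
      (orbitSpaceDeriv f a x₀ N *
        ∑ k ∈ Finset.Icc 1 N, deriv (fun b => f b ((f a)^[k - 1] x₀)) a / orbitSpaceDeriv f a x₀ k)
      a := by
  induction N with
  | zero => simpa using hasDerivAt_const a x₀
  | succ N ih =>
    have hstep := hasDerivAt_param_comp (hdiff N N.lt_succ_self)
      (ih (fun i hi => hdiff i (by omega)) (fun k hk => hD k (by omega)))
    simp only [← Function.iterate_succ_apply' (f _)] at hstep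
    convert hstep using 1
    have hDN := hD (N + 1) le_rfl
    rw [Finset.sum_Icc_succ_top (by omega), Nat.add_sub_cancel, mul_add, mul_div_cancel₀ _ hDN,
      orbitSpaceDeriv_succ]
    ring

theorem abs_sum_div_le {ι : Type*} {s : Finset ι} {α D : ι → ℝ} {A : ℝ}
    (hD : ∀ k ∈ s, 0 < D k) (hα : ∀ k ∈ s, |α k| ≤ A) :
    |∑ k ∈ s, α k / D k| ≤ A * ∑ k ∈ s, 1 / D k := by
  rw [Finset.mul_sum]
  refine (Finset.abs_sum_le_sum_abs _ _).trans (Finset.sum_le_sum fun k hk => ?_)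
  rw [abs_div, abs_of_pos (hD k hk), mul_one_div]
  exact div_le_div_of_nonneg_right (hα k hk) (hD k hk).le

theorem sub_le_abs_sum_Icc_div {N : ℕ} (hN : 1 ≤ N) {α D : ℕ → ℝ} {A₁ A₂ : ℝ}
    (hD : ∀ k ∈ Finset.Icc 1 N, 0 < D k) (hα₁ : A₁ ≤ |α 1|)
    (hα₂ : ∀ k ∈ Finset.Icc 2 N, |α k| ≤ A₂) :
    A₁ / D 1 - A₂ * ∑ k ∈ Finset.Icc 2 N, 1 / D k ≤ |∑ k ∈ Finset.Icc 1 N, α k / D k| := by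
  have hD₁ : 0 < D 1 := hD 1 (Finset.mem_Icc.2 ⟨le_rfl, hN⟩)
  have htail := abs_sum_div_le (fun k hk => hD k (Finset.Icc_subset_Icc_left one_le_two hk)) hα₂
  have hhead : A₁ / D 1 ≤ |α 1 / D 1| := by
    rw [abs_div, abs_of_pos hD₁]
    exact div_le_div_of_nonneg_right hα₁ hD₁.le
  rw [← Finset.insert_Icc_add_one_left_eq_Icc hN, Finset.sum_insert (by simp)]
  linarith [abs_sub_abs_le_abs_add (α 1 / D 1) (∑ k ∈ Finset.Icc 2 N, α k / D k)]

theorem statement16_general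
    (f : ℝ → ℝ → ℝ)
    (hmaps : ∀ a, MapsTo (f a) (Icc (-1:ℝ) 1) (Icc (-1:ℝ) 1))
    (hC1 : ContDiffOn ℝ 1 (fun pr : ℝ × ℝ => f pr.1 pr.2) {pr : ℝ × ℝ | pr.2 ≠ 0})
    (a : ℝ) (n : ℕ) (hn : 2 ≤ n)
    (A₁ A₂ : ℝ)
    (hxi : ∀ k : ℕ, 1 ≤ k → k ≤ n - 1 → (f a)^[k - 1] (-1) ≠ 0)
    (hD : ∀ k : ℕ, 1 ≤ k → k ≤ n - 1 →
      0 < ∏ i ∈ Finset.range k, deriv (f a) ((f a)^[i] (-1)))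
    (hbound : ∀ x ∈ Icc (-1:ℝ) 1, x ≠ 0 →
      A₁ ≤ |deriv (fun b => f b x) a| ∧ |deriv (fun b => f b x) a| ≤ A₂) :
    A₁ / (∏ i ∈ Finset.range 1, deriv (f a) ((f a)^[i] (-1))) -
        A₂ * ∑ k ∈ Finset.Icc 2 (n - 1),
          1 / (∏ i ∈ Finset.range k, deriv (f a) ((f a)^[i] (-1))) ≤
      |deriv (fun b => (f b)^[n - 1] (-1)) a| /
        (∏ i ∈ Finset.range (n - 1), deriv (f a) ((f a)^[i] (-1))) ∧
    |deriv (fun b => (f b)^[n - 1] (-1)) a| /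
        (∏ i ∈ Finset.range (n - 1), deriv (f a) ((f a)^[i] (-1))) ≤
      A₂ * ∑ k ∈ Finset.Icc 1 (n - 1),
        1 / (∏ i ∈ Finset.range k, deriv (f a) ((f a)^[i] (-1))) := by
  set N := n - 1
  have hN : 1 ≤ N := by omega
  have hDpos : ∀ k ∈ Finset.Icc 1 N, 0 < orbitSpaceDeriv f a (-1) k := fun k hk =>
    hD k (Finset.mem_Icc.1 hk).1 (Finset.mem_Icc.1 hk).2
  have hdiff : ∀ i < N, DifferentiableAt ℝ (fun p : ℝ × ℝ => f p.1 p.2) (a, (f a)^[i] (-1)) :=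
    fun i hi => (hC1.differentiableOn one_ne_zero).differentiableAt <|
      (isOpen_ne.preimage continuous_snd).mem_nhds (hxi (i + 1) (by omega) (by omega))
  have hderiv := hasDerivAt_iterate_param hdiff fun k hk => by
    rcases k with _ | k
    · simp [orbitSpaceDeriv]
    · exact (hDpos (k + 1) (Finset.mem_Icc.2 ⟨by omega, hk⟩)).ne'
  have hα : ∀ k ∈ Finset.Icc 1 N, A₁ ≤ |deriv (fun b => f b ((f a)^[k - 1] (-1))) a| ∧
      |deriv (fun b => f b ((f a)^[k - 1] (-1))) a| ≤ A₂ := fun k hk =>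
    hbound _ ((hmaps a).iterate _ (left_mem_Icc.2 (by norm_num)))
      (hxi k (Finset.mem_Icc.1 hk).1 (Finset.mem_Icc.1 hk).2)
  have hDN := hDpos N (Finset.mem_Icc.2 ⟨hN, le_rfl⟩)
  change _ ≤ |deriv _ a| / orbitSpaceDeriv f a (-1) N ∧ |deriv _ a| / orbitSpaceDeriv f a (-1) N ≤ _
  rw [hderiv.deriv, abs_mul, abs_of_pos hDN, mul_div_cancel_left₀ _ hDN.ne']
  exact ⟨sub_le_abs_sum_Icc_div hN hDpos (hα 1 (Finset.mem_Icc.2 ⟨le_rfl, hN⟩)).1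
      fun k hk => (hα k (Finset.Icc_subset_Icc_left one_le_two hk)).2,
    abs_sum_div_le hDpos fun k hk => (hα k hk).2⟩

/-- quantitative bound (4.1.4) in the proof of Proposition 2.2
of the paper: two-sided bound for `|ξ_n'(a)| / D_{n-1}(a)` in terms of the
bounds `A₁ ≤ |∂f/∂a| ≤ A₂` and the sums `Σ 1/D_k(a)`. -/
theorem statement16
    (f : ℝ → ℝ → ℝ)
    (hmaps : ∀ a, MapsTo (f a) (Icc (-1:ℝ) 1) (Icc (-1:ℝ) 1))
    (hC1 : ContDiffOn ℝ 1 (fun pr : ℝ × ℝ => f pr.1 pr.2) {pr : ℝ × ℝ | pr.2 ≠ 0})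
    (a : ℝ) (n : ℕ) (hn : 2 ≤ n)
    (A₁ A₂ : ℝ) (hA₁ : 0 < A₁) (hA₁₂ : A₁ ≤ A₂)
    (hxi : ∀ k : ℕ, 1 ≤ k → k ≤ n - 1 → (f a)^[k - 1] (-1) ≠ 0)
    (hD : ∀ k : ℕ, 1 ≤ k → k ≤ n - 1 →
      0 < ∏ i ∈ Finset.range k, deriv (f a) ((f a)^[i] (-1)))
    (hbound : ∀ x ∈ Icc (-1:ℝ) 1, x ≠ 0 →
      A₁ ≤ |deriv (fun b => f b x) a| ∧ |deriv (fun b => f b x) a| ≤ A₂) :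
    A₁ / (∏ i ∈ Finset.range 1, deriv (f a) ((f a)^[i] (-1))) -
        A₂ * ∑ k ∈ Finset.Icc 2 (n - 1),
          1 / (∏ i ∈ Finset.range k, deriv (f a) ((f a)^[i] (-1))) ≤
      |deriv (fun b => (f b)^[n - 1] (-1)) a| /
        (∏ i ∈ Finset.range (n - 1), deriv (f a) ((f a)^[i] (-1))) ∧
    |deriv (fun b => (f b)^[n - 1] (-1)) a| /
        (∏ i ∈ Finset.range (n - 1), deriv (f a) ((f a)^[i] (-1))) ≤
      A₂ * ∑ k ∈ Finset.Icc 1 (n - 1),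
        1 / (∏ i ∈ Finset.range k, deriv (f a) ((f a)^[i] (-1))) :=
  statement16_general f hmaps hC1 a n hn A₁ A₂ hxi hD hbound
end
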